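/- There exists a constant C̃₂ > 0 depending only on the reference triangle such that for every triangle T and every u ∈ P₁(T), C̃₂||u||_{L²(T)} ≤ sup over nonzero v ∈ P₁(T) of (∫_T u b_T v dx)/||v||_{L²(T)} ≤ ||u||_{L²(T)}. -/

import Mathlib

/-!
Since `0 ≤ b_T ≤ 1` on `T`, Cauchy–Schwarz bounds every quotient by `‖u‖`. For the lower bound
test with `v = u`. The affine map `F` sending the reference triangle `{s, t ≥ 0, s + t ≤ 1}` onto
`T` turns `lam` into `(1 - s - t, s, t)` and `u` into an affine `w`, and multiplies both
`∫_T u² b_T` and `∫_T u²` by `|det F|`. On the reference triangle both are explicit quadratic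
forms in the coefficients of `w`, obtained from the moments `∫ s^a t^b = a! b! / (a + b + 2)!`,
and comparing them gives `∫_T u² b_T ≥ ‖u‖² / 4`.
-/

open MeasureTheory Set Nat

theorem Continuous.memLp_restrict_of_isCompact {X E : Type*} [TopologicalSpace X] [T2Space X]
    [MeasurableSpace X] [OpensMeasurableSpace X] {μ : Measure X} [IsFiniteMeasureOnCompacts μ]
    [NormedAddCommGroup E] {f : X → E} (hf : Continuous f) {K : Set X} (hK : IsCompact K)
    (p : ENNReal) : MemLp f p (μ.restrict K) := by
  have : IsFiniteMeasure (μ.restrict K) := isFiniteMeasure_restrict.2 hK.measure_lt_top.ne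
  obtain ⟨C, hC⟩ := hK.exists_bound_of_continuousOn hf.continuousOn
  exact .of_bound (hf.continuousOn.aestronglyMeasurable_of_isCompact hK hK.measurableSet) C
    (ae_restrict_of_forall_mem hK.measurableSet hC)

theorem integral_mul_mul_le_sqrt_mul_sqrt {α : Type*} [MeasurableSpace α] {μ : Measure α}
    {f g h : α → ℝ} (hf : MemLp f 2 μ) (hg : MemLp g 2 μ) (hh : ∀ᵐ a ∂μ, |h a| ≤ 1) :
    ∫ a, f a * h a * g a ∂μ ≤ √(∫ a, f a ^ 2 ∂μ) * √(∫ a, g a ^ 2 ∂μ) := by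
  have hfg : Integrable (fun a => ‖f a‖ * ‖g a‖) μ := hf.norm.integrable_mul hg.norm
  have hholder := integral_mul_norm_le_Lp_mul_Lq Real.HolderConjugate.two_two
    (by simpa using hf) (by simpa using hg)
  simp only [Real.norm_eq_abs, Real.rpow_two, sq_abs, ← Real.sqrt_eq_rpow] at hholder
  calc ∫ a, f a * h a * g a ∂μ ≤ ‖∫ a, f a * h a * g a ∂μ‖ := Real.le_norm_self _
    _ ≤ ∫ a, ‖f a‖ * ‖g a‖ ∂μ := by
      refine norm_integral_le_of_norm_le hfg (hh.mono fun a ha => ?_)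
      rw [norm_mul, norm_mul, Real.norm_eq_abs (h a)]
      exact mul_le_mul_of_nonneg_right (mul_le_of_le_one_right (norm_nonneg _) ha) (norm_nonneg _)
    _ ≤ _ := by simpa only [Real.norm_eq_abs] using hholder

theorem setIntegral_image_affineMap {E : Type*} [NormedAddCommGroup E] [NormedSpace ℝ E]
    [FiniteDimensional ℝ E] [MeasurableSpace E] [BorelSpace E] (μ : Measure E)
    [μ.IsAddHaarMeasure] (F : E →ᵃ[ℝ] E) {s : Set E} (hs : MeasurableSet s) (hF : InjOn F s)
    (g : E → ℝ) :
    ∫ x in F '' s, g x ∂μ = |LinearMap.det F.linear| * ∫ x in s, g (F x) ∂μ := by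
  have hderiv : ∀ x ∈ s, HasFDerivWithinAt F (LinearMap.toContinuousLinearMap F.linear) s x :=
    fun x _ => by
      rw [F.decomp]
      exact ((LinearMap.toContinuousLinearMap F.linear).hasFDerivAt.add_const _).hasFDerivWithinAt
  rw [integral_image_eq_integral_abs_det_fderiv_smul μ hs hderiv hF]
  simp only [LinearMap.det_toContinuousLinearMap, smul_eq_mul, integral_const_mul]

theorem integral_pow_mul_one_sub_pow (c : ℕ) : ∀ a : ℕ,
    ∫ s in (0 : ℝ)..1, s ^ a * (1 - s) ^ c = (a ! * c ! : ℝ) / (a + c + 1)! := by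
  induction c with
  | zero =>
    intro a
    simp only [pow_zero, mul_one, integral_pow, one_pow, zero_pow a.succ_ne_zero, sub_zero,
      add_zero, factorial_zero, cast_one, factorial_succ a, cast_mul, cast_add]
    field_simp
  | succ c ih =>
    intro a
    have hsplit : ∫ s in (0 : ℝ)..1, s ^ a * (1 - s) ^ (c + 1) =
        (∫ s in (0 : ℝ)..1, s ^ a * (1 - s) ^ c) -
          ∫ s in (0 : ℝ)..1, s ^ (a + 1) * (1 - s) ^ c := by
      rw [← intervalIntegral.integral_sub ((by fun_prop : Continuous _).intervalIntegrable _ _)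
        ((by fun_prop : Continuous _).intervalIntegrable _ _)]
      congr 1 with s
      ring
    rw [hsplit, ih, ih, show a + 1 + c + 1 = (a + c + 1) + 1 by ring,
      show a + (c + 1) + 1 = (a + c + 1) + 1 by ring]
    simp only [Nat.factorial_succ a, Nat.factorial_succ c, Nat.factorial_succ (a + c + 1)]
    push_cast
    field_simp
    ring

def refTriangle : Set (ℝ × ℝ) := {q | 0 ≤ q.1 ∧ 0 ≤ q.2 ∧ q.1 + q.2 ≤ 1}

theorem convex_refTriangle : Convex ℝ refTriangle := by
  rintro x ⟨hx₁, hx₂, hx₃⟩ y ⟨hy₁, hy₂, hy₃⟩ a b ha hb hab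
  refine ⟨?_, ?_, ?_⟩ <;> simp only [Prod.fst_add, Prod.snd_add, Prod.smul_fst, Prod.smul_snd,
    smul_eq_mul] <;> nlinarith

theorem convexHull_refVertices :
    convexHull ℝ (range ![((0 : ℝ), (0 : ℝ)), (1, 0), (0, 1)]) = refTriangle := by
  refine (convexHull_min ?_ convex_refTriangle).antisymm fun q ⟨hq₁, hq₂, hq₃⟩ => ?_
  · rintro _ ⟨i, rfl⟩
    fin_cases i <;> simp [refTriangle]
  · refine mem_convexHull_of_exists_fintype ![1 - q.1 - q.2, q.1, q.2]
      ![((0 : ℝ), (0 : ℝ)), (1, 0), (0, 1)] (fun i => ?_) ?_ mem_range_self ?_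
    · fin_cases i
      exacts [show 0 ≤ 1 - q.1 - q.2 by linarith, hq₁, hq₂]
    · rw [Fin.sum_univ_three]
      exact show 1 - q.1 - q.2 + q.1 + q.2 = 1 by ring
    · ext <;> simp [Fin.sum_univ_three]

theorem isCompact_refTriangle : IsCompact refTriangle := by
  rw [← convexHull_refVertices]
  exact (finite_range _).isCompact_convexHull ℝ

theorem measurableSet_refTriangle : MeasurableSet refTriangle :=
  isCompact_refTriangle.measurableSet

theorem integrableOn_refTriangle {g : ℝ × ℝ → ℝ} (hg : Continuous g) :
    IntegrableOn g refTriangle :=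
  hg.continuousOn.integrableOn_compact (μ := volume) isCompact_refTriangle

theorem mk_mem_refTriangle_iff {s t : ℝ} :
    (s, t) ∈ refTriangle ↔ s ∈ Icc 0 1 ∧ t ∈ Icc 0 (1 - s) := by
  simp only [refTriangle, mem_ofPred_eq, mem_Icc]
  constructor
  · rintro ⟨h₁, h₂, h₃⟩; exact ⟨⟨h₁, by linarith⟩, h₂, by linarith⟩
  · rintro ⟨⟨h₁, -⟩, h₂, h₃⟩; exact ⟨h₁, h₂, by linarith⟩

theorem setIntegral_refTriangle {g : ℝ × ℝ → ℝ} (hg : Continuous g) :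
    ∫ q in refTriangle, g q = ∫ s in (0 : ℝ)..1, ∫ t in (0 : ℝ)..(1 - s), g (s, t) := by
  have hint := (integrableOn_refTriangle hg).integrable_indicator measurableSet_refTriangle
  rw [Measure.volume_eq_prod] at hint
  rw [← integral_indicator measurableSet_refTriangle, Measure.volume_eq_prod, integral_prod _ hint,
    intervalIntegral.integral_of_le zero_le_one, ← integral_Icc_eq_integral_Ioc,
    ← integral_indicator measurableSet_Icc]
  congr 1 with s
  by_cases hs : s ∈ Icc 0 1
  · rw [indicator_of_mem hs, intervalIntegral.integral_of_le (by linarith [hs.2]),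
      ← integral_Icc_eq_integral_Ioc, ← integral_indicator measurableSet_Icc]
    congr 1 with t
    by_cases ht : t ∈ Icc 0 (1 - s)
    · rw [indicator_of_mem ht, indicator_of_mem (mk_mem_refTriangle_iff.2 ⟨hs, ht⟩)]
    · rw [indicator_of_notMem ht, indicator_of_notMem fun h => ht (mk_mem_refTriangle_iff.1 h).2]
  · rw [indicator_of_notMem hs]
    simp [indicator_of_notMem fun h => hs (mk_mem_refTriangle_iff.1 h).1]

noncomputable def refMoment (a b : ℕ) : ℝ := ∫ q in refTriangle, q.1 ^ a * q.2 ^ b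

theorem refMoment_eq (a b : ℕ) : refMoment a b = (a ! * b ! : ℝ) / (a + b + 2)! := by
  rw [refMoment, setIntegral_refTriangle (by fun_prop)]
  simp only [intervalIntegral.integral_const_mul, integral_pow]
  have hinner : ∀ s : ℝ, s ^ a * (((1 - s) ^ (b + 1) - 0 ^ (b + 1)) / (b + 1)) =
      (b + 1 : ℝ)⁻¹ * (s ^ a * (1 - s) ^ (b + 1)) := fun s => by
    rw [zero_pow b.succ_ne_zero]; ring
  simp_rw [hinner]
  rw [intervalIntegral.integral_const_mul, integral_pow_mul_one_sub_pow,
    show a + (b + 1) + 1 = a + b + 2 by ring, Nat.factorial_succ b]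
  push_cast
  field_simp

theorem setIntegral_refTriangle_sq_mul_monomial (γ₀ γ₁ γ₂ : ℝ) (i j : ℕ) :
    ∫ q in refTriangle, (γ₀ + q.1 * γ₁ + q.2 * γ₂) ^ 2 * (q.1 ^ i * q.2 ^ j) =
      γ₀ ^ 2 * refMoment i j + 2 * γ₀ * γ₁ * refMoment (i + 1) j +
        2 * γ₀ * γ₂ * refMoment i (j + 1) + γ₁ ^ 2 * refMoment (i + 2) j +
        2 * γ₁ * γ₂ * refMoment (i + 1) (j + 1) + γ₂ ^ 2 * refMoment i (j + 2) := by
  have hexpand : ∀ q : ℝ × ℝ, (γ₀ + q.1 * γ₁ + q.2 * γ₂) ^ 2 * (q.1 ^ i * q.2 ^ j) =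
      γ₀ ^ 2 * (q.1 ^ i * q.2 ^ j) + 2 * γ₀ * γ₁ * (q.1 ^ (i + 1) * q.2 ^ j) +
        2 * γ₀ * γ₂ * (q.1 ^ i * q.2 ^ (j + 1)) + γ₁ ^ 2 * (q.1 ^ (i + 2) * q.2 ^ j) +
        2 * γ₁ * γ₂ * (q.1 ^ (i + 1) * q.2 ^ (j + 1)) + γ₂ ^ 2 * (q.1 ^ i * q.2 ^ (j + 2)) :=
    fun q => by ring
  simp_rw [hexpand]
  rw [integral_add, integral_add, integral_add, integral_add, integral_add]
  · simp only [integral_const_mul, refMoment]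
  all_goals exact integrableOn_refTriangle (by fun_prop)

/- Both sides are quadratic forms in `(γ₀, γ₁, γ₂)`; the best constant is `9 / 35`, and `1 / 4`
leaves room for the short sum-of-squares certificate below. -/
theorem quarter_mul_setIntegral_refTriangle_sq_le (γ₀ γ₁ γ₂ : ℝ) :
    1 / 4 * ∫ q in refTriangle, (γ₀ + q.1 * γ₁ + q.2 * γ₂) ^ 2 ≤
      ∫ q in refTriangle,
        (γ₀ + q.1 * γ₁ + q.2 * γ₂) ^ 2 * (27 * ((1 - q.1 - q.2) * q.1 * q.2)) := by
  set w : ℝ × ℝ → ℝ := fun q => γ₀ + q.1 * γ₁ + q.2 * γ₂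
  have hmass : ∫ q in refTriangle, w q ^ 2 = ∫ q in refTriangle, w q ^ 2 * (q.1 ^ 0 * q.2 ^ 0) := by
    simp
  have hbubble : ∫ q in refTriangle, w q ^ 2 * (27 * ((1 - q.1 - q.2) * q.1 * q.2)) =
      27 * ((∫ q in refTriangle, w q ^ 2 * (q.1 ^ 1 * q.2 ^ 1)) -
        (∫ q in refTriangle, w q ^ 2 * (q.1 ^ 2 * q.2 ^ 1)) -
          ∫ q in refTriangle, w q ^ 2 * (q.1 ^ 1 * q.2 ^ 2)) := by
    rw [← integral_sub, ← integral_sub, ← integral_const_mul]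
    · congr 1 with q; ring
    all_goals exact integrableOn_refTriangle (by fun_prop)
  rw [hmass, hbubble]
  simp only [w, setIntegral_refTriangle_sq_mul_monomial, refMoment_eq]
  norm_num [Nat.factorial]
  nlinarith [sq_nonneg γ₀, sq_nonneg (γ₀ + γ₁), sq_nonneg (γ₀ + γ₂), sq_nonneg (3 * γ₀ + γ₁ + γ₂)]

section

variable {V : Type*} [AddCommGroup V] [Module ℝ V]

def triangleParam (p : Fin 3 → V) : ℝ × ℝ →ᵃ[ℝ] V :=
  ((LinearMap.fst ℝ ℝ ℝ).smulRight (p 1 - p 0) +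
    (LinearMap.snd ℝ ℝ ℝ).smulRight (p 2 - p 0)).toAffineMap + AffineMap.const ℝ _ (p 0)

theorem triangleParam_apply (p : Fin 3 → V) (q : ℝ × ℝ) :
    triangleParam p q = q.1 • (p 1 - p 0) + q.2 • (p 2 - p 0) + p 0 := rfl

theorem AffineMap.apply_triangleParam (g : V →ᵃ[ℝ] ℝ) (p : Fin 3 → V) (q : ℝ × ℝ) :
    g (triangleParam p q) = g (p 0) + q.1 * (g (p 1) - g (p 0)) + q.2 * (g (p 2) - g (p 0)) := by
  rw [triangleParam_apply, ← vadd_eq_add, g.map_vadd, vadd_eq_add, map_add, map_smul, map_smul,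
    ← vsub_eq_sub, ← vsub_eq_sub, g.linearMap_vsub, g.linearMap_vsub, vsub_eq_sub, vsub_eq_sub,
    smul_eq_mul, smul_eq_mul]
  ring

theorem barycentric_apply_triangleParam {p : Fin 3 → V} {lam : Fin 3 → V →ᵃ[ℝ] ℝ}
    (hlam : ∀ i j, lam i (p j) = if i = j then 1 else 0) (q : ℝ × ℝ) :
    lam 0 (triangleParam p q) = 1 - q.1 - q.2 ∧ lam 1 (triangleParam p q) = q.1 ∧
      lam 2 (triangleParam p q) = q.2 := by
  simp only [AffineMap.apply_triangleParam, hlam, Fin.reduceEq, ↓reduceIte]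
  refine ⟨?_, ?_, ?_⟩ <;> ring

theorem abs_bubble_le_one {p : Fin 3 → V} {lam : Fin 3 → V →ᵃ[ℝ] ℝ}
    (hlam : ∀ i j, lam i (p j) = if i = j then 1 else 0) (hsum : ∀ x, ∑ i, lam i x = 1)
    {x : V} (hx : x ∈ convexHull ℝ (range p)) : |27 * (lam 0 x * lam 1 x * lam 2 x)| ≤ 1 := by
  have hnonneg : ∀ i, 0 ≤ lam i x := fun i =>
    convexHull_min (t := lam i ⁻¹' Ici 0)
      (by rintro _ ⟨j, rfl⟩; simp only [mem_preimage, mem_Ici, hlam]; split_ifs <;> norm_num)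
      ((convex_Ici 0).affine_preimage (lam i)) hx
  have h₀ := hnonneg 0
  have h₁ := hnonneg 1
  have h₂ := hnonneg 2
  have hx₁ := hsum x
  rw [Fin.sum_univ_three] at hx₁
  rw [abs_of_nonneg (by positivity)]
  nlinarith [sq_nonneg (lam 0 x - lam 1 x), sq_nonneg (lam 1 x - lam 2 x),
    sq_nonneg (lam 0 x - lam 2 x), mul_nonneg h₀ h₁, mul_nonneg h₁ h₂, mul_nonneg h₀ h₂]

theorem triangleParam_image_refTriangle (p : Fin 3 → V) :
    triangleParam p '' refTriangle = convexHull ℝ (range p) := by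
  have hvertices : triangleParam p ∘ ![((0 : ℝ), (0 : ℝ)), (1, 0), (0, 1)] = p := by
    funext i
    fin_cases i <;> simp [triangleParam_apply]
  rw [← convexHull_refVertices, (triangleParam p).image_convexHull, ← range_comp, hvertices]

end

theorem quarter_mul_setIntegral_sq_le_setIntegral_mul_bubble_mul {p : Fin 3 → ℝ × ℝ}
    {lam : Fin 3 → ℝ × ℝ →ᵃ[ℝ] ℝ} (hlam : ∀ i j, lam i (p j) = if i = j then 1 else 0)
    {u : ℝ × ℝ → ℝ} {a b c : ℝ} (hu : ∀ x, u x = a * x.1 + b * x.2 + c) :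
    1 / 4 * ∫ x in convexHull ℝ (range p), u x ^ 2 ≤
      ∫ x in convexHull ℝ (range p), u x * (27 * (lam 0 x * lam 1 x * lam 2 x)) * u x := by
  set F := triangleParam p
  have hlamF := barycentric_apply_triangleParam hlam
  have huF : ∀ q, u (F q) = u (p 0) + q.1 * (u (p 1) - u (p 0)) + q.2 * (u (p 2) - u (p 0)) := by
    intro q
    simp only [hu, F, triangleParam_apply, Prod.fst_add, Prod.snd_add, Prod.smul_fst,
      Prod.smul_snd, Prod.fst_sub, Prod.snd_sub, smul_eq_mul]
    ring
  -- the barycentric coordinates `lam 1`, `lam 2` invert `F`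
  have hinj : InjOn F refTriangle := fun q _ q' _ h => by
    have h₁ := congrArg (lam 1) h
    have h₂ := congrArg (lam 2) h
    rw [(hlamF q).2.1, (hlamF q').2.1] at h₁
    rw [(hlamF q).2.2, (hlamF q').2.2] at h₂
    exact Prod.ext h₁ h₂
  have hpull : ∀ g : ℝ × ℝ → ℝ, ∫ x in convexHull ℝ (range p), g x =
      |LinearMap.det F.linear| * ∫ q in refTriangle, g (F q) := fun g => by
    rw [← triangleParam_image_refTriangle, setIntegral_image_affineMap volume F
      measurableSet_refTriangle hinj]
  rw [hpull, hpull, mul_left_comm]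
  refine mul_le_mul_of_nonneg_left ?_ (abs_nonneg _)
  refine Eq.trans_le ?_ ((quarter_mul_setIntegral_refTriangle_sq_le (u (p 0))
    (u (p 1) - u (p 0)) (u (p 2) - u (p 0))).trans_eq ?_)
  · simp only [huF]
  · congr 1 with q
    obtain ⟨h₀, h₁, h₂⟩ := hlamF q
    rw [huF, h₀, h₁, h₂]
    ring

theorem setIntegral_mul_bubble_mul_div_sqrt_le {E : Type*} [NormedAddCommGroup E]
    [NormedSpace ℝ E] [FiniteDimensional ℝ E] [MeasurableSpace E] [BorelSpace E] {μ : Measure E}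
    [IsFiniteMeasureOnCompacts μ] {p : Fin 3 → E} {lam : Fin 3 → E →ᵃ[ℝ] ℝ}
    (hlam : ∀ i j, lam i (p j) = if i = j then 1 else 0) (hsum : ∀ x, ∑ i, lam i x = 1)
    {u v : E → ℝ} (hu : Continuous u) (hv : Continuous v) :
    (∫ x in convexHull ℝ (range p), u x * (27 * (lam 0 x * lam 1 x * lam 2 x)) * v x ∂μ) /
        √(∫ x in convexHull ℝ (range p), v x ^ 2 ∂μ) ≤
      √(∫ x in convexHull ℝ (range p), u x ^ 2 ∂μ) := by
  have hT : IsCompact (convexHull ℝ (range p)) := (finite_range p).isCompact_convexHull ℝ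
  -- `div_le_of_le_mul₀` also covers `∫ v ^ 2 = 0`, where the quotient is `x / 0 = 0`
  refine div_le_of_le_mul₀ (Real.sqrt_nonneg _) (Real.sqrt_nonneg _) ?_
  exact integral_mul_mul_le_sqrt_mul_sqrt (hu.memLp_restrict_of_isCompact hT 2)
    (hv.memLp_restrict_of_isCompact hT 2)
    (ae_restrict_of_forall_mem hT.measurableSet fun x hx => abs_bubble_le_one hlam hsum hx)

theorem mul_sqrt_le_div_sqrt {c x y : ℝ} (h : c * x ≤ y) : c * √x ≤ y / √x :=
  calc c * √x = c * x / √x := by rw [mul_div_assoc, Real.div_sqrt]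
    _ ≤ y / √x := div_le_div_of_nonneg_right h (Real.sqrt_nonneg x)

/-- There is C̃₂ > 0 depending only on the reference triangle such that
for every triangle T (convex hull of affinely independent points, with barycentric
coordinates lam) and every affine u ∈ P₁(T),
C̃₂‖u‖_{L²(T)} ≤ sup_{0 ≠ v ∈ P₁(T)} (∫_T u b_T v dx)/‖v‖_{L²(T)} ≤ ‖u‖_{L²(T)}. -/
theorem stmt_7 :
    ∃ C : ℝ, 0 < C ∧
      ∀ (p : Fin 3 → ℝ × ℝ), AffineIndependent ℝ p →
      ∀ (lam : Fin 3 → ((ℝ × ℝ) →ᵃ[ℝ] ℝ)),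
        (∀ i j, lam i (p j) = if i = j then 1 else 0) →
        (∀ x : ℝ × ℝ, (∑ i, lam i x) = 1) →
      ∀ u : ℝ × ℝ → ℝ, (∃ a b c : ℝ, ∀ x : ℝ × ℝ, u x = a * x.1 + b * x.2 + c) →
        C * Real.sqrt (∫ x in convexHull ℝ (Set.range p), (u x) ^ 2)
            ≤ sSup {r : ℝ | ∃ v : ℝ × ℝ → ℝ,
                (∃ a b c : ℝ, ∀ x : ℝ × ℝ, v x = a * x.1 + b * x.2 + c) ∧
                (∃ x ∈ convexHull ℝ (Set.range p), v x ≠ 0) ∧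
                r = (∫ x in convexHull ℝ (Set.range p),
                      u x * (27 * (lam 0 x * lam 1 x * lam 2 x)) * v x)
                    / Real.sqrt (∫ x in convexHull ℝ (Set.range p), (v x) ^ 2)}
          ∧ sSup {r : ℝ | ∃ v : ℝ × ℝ → ℝ,
                (∃ a b c : ℝ, ∀ x : ℝ × ℝ, v x = a * x.1 + b * x.2 + c) ∧
                (∃ x ∈ convexHull ℝ (Set.range p), v x ≠ 0) ∧
                r = (∫ x in convexHull ℝ (Set.range p),
                      u x * (27 * (lam 0 x * lam 1 x * lam 2 x)) * v x)
                    / Real.sqrt (∫ x in convexHull ℝ (Set.range p), (v x) ^ 2)}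
            ≤ Real.sqrt (∫ x in convexHull ℝ (Set.range p), (u x) ^ 2) := by
  refine ⟨1 / 4, by norm_num, fun p _ lam hlam hsum u hu => ?_⟩
  have hcont : ∀ v : ℝ × ℝ → ℝ, (∃ a b c : ℝ, ∀ x : ℝ × ℝ, v x = a * x.1 + b * x.2 + c) →
      Continuous v := by
    rintro v ⟨a, b, c, hv⟩
    rw [funext hv]
    fun_prop
  have hupper := fun v hv => setIntegral_mul_bubble_mul_div_sqrt_le (μ := volume) hlam hsum
    (hcont u hu) (hcont v hv)
  refine ⟨?_, Real.sSup_le (fun r ⟨v, hv, _, hr⟩ => hr ▸ hupper v hv) (Real.sqrt_nonneg _)⟩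
  by_cases hu₀ : ∀ x ∈ convexHull ℝ (range p), u x = 0
  · rw [setIntegral_eq_zero_of_forall_eq_zero fun x hx => by simp [hu₀ x hx], Real.sqrt_zero,
      mul_zero]
    refine Real.sSup_nonneg fun r ⟨v, _, _, hr⟩ => ?_
    rw [hr, setIntegral_eq_zero_of_forall_eq_zero fun x hx => by simp [hu₀ x hx], zero_div]
  push Not at hu₀
  obtain ⟨a, b, c, hu'⟩ := hu
  refine le_csSup_of_le ⟨_, fun r ⟨v, hv, _, hr⟩ => hr ▸ hupper v hv⟩
    ⟨u, ⟨a, b, c, hu'⟩, hu₀, rfl⟩ ?_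
  exact mul_sqrt_le_div_sqrt (quarter_mul_setIntegral_sq_le_setIntegral_mul_bubble_mul hlam hu')
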